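/- In the post-Lie algebra (L, [.,.]_0, ▶̂) of multi-index derivations, the derived bracket [[x,y]] := [x,y]_0 + x ▶̂ y - y ▶̂ x equals the commutator bracket [x,y] of x and y as derivations on R[[z_k, z_n]]. In particular, [[z^γ D^{(n)}, partial_i]] = n_i z^γ D^{(n-e_i)} - (partial_i z^γ)D^{(n)}. -/

import Mathlib

open MvPolynomial

/-- Multi-indices in `ℕ^{d+1}`. -/
abbrev MIdx (d : ℕ) := Fin (d + 1) → ℕ

/-- The `i`-th canonical basis vector of `ℕ^{d+1}`. -/
def eVec (d : ℕ) (i : Fin (d + 1)) : MIdx d := Pi.single i 1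

/-- The variables `z_k` (`k ∈ ℕ`) and `z_n` (`n ∈ ℕ^{d+1}`, `n ≠ 0`). -/
abbrev Var (d : ℕ) := ℕ ⊕ {n : MIdx d // n ≠ 0}

/-- The polynomial algebra `ℝ[z_k, z_n]`. -/
abbrev Rg (d : ℕ) := MvPolynomial (Var d) ℝ

lemma eVec_ne_zero {d : ℕ} (i : Fin (d + 1)) : eVec d i ≠ 0 := by
  intro h
  have := congrFun h i
  simp [eVec] at this

lemma add_eVec_ne_zero {d : ℕ} (n : MIdx d) (i : Fin (d + 1)) :
    n + eVec d i ≠ 0 := by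
  intro h
  have := congrFun h i
  simp [eVec] at this

/-- The derivation `D^{(n)}`: `D^{(0)} = ∑_k (k+1) z_{k+1} ∂_{z_k}` and
`D^{(n)} = ∂_{z_n}` for `n ≠ 0`. -/
noncomputable def Dop {d : ℕ} (n : MIdx d) : Derivation ℝ (Rg d) (Rg d) :=
  if n = 0 then
    MvPolynomial.mkDerivation ℝ (fun v =>
      match v with
      | .inl k => ((k + 1 : ℕ) : ℝ) • (X (.inl (k + 1)) : Rg d)
      | .inr _ => 0)
  else
    MvPolynomial.mkDerivation ℝ (fun v =>
      match v with
      | .inl _ => 0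
      | .inr m => if m.val = n then 1 else 0)

/-- The derivation `∂_i = ∑_n (n_i + 1) z_{n+e_i} D^{(n)}`: it sends
`z_k ↦ (k+1) z_{e_i} z_{k+1}` (the `n = 0` contribution) and
`z_m ↦ (m_i + 1) z_{m+e_i}` for `m ≠ 0`. -/
noncomputable def partialOp {d : ℕ} (i : Fin (d + 1)) :
    Derivation ℝ (Rg d) (Rg d) :=
  MvPolynomial.mkDerivation ℝ (fun v =>
    match v with
    | .inl k => ((k + 1 : ℕ) : ℝ) •
        ((X (.inr ⟨eVec d i, eVec_ne_zero i⟩) : Rg d) * X (.inl (k + 1)))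
    | .inr m => ((m.val i + 1 : ℕ) : ℝ) •
        (X (.inr ⟨m.val + eVec d i, add_eVec_ne_zero m.val i⟩) : Rg d))


/-- `[γ] = ∑_k k γ(k) - ∑_{n ≠ 0} γ(n)` for a multi-index `γ` over the variables. -/
def bc {d : ℕ} (γ : Var d →₀ ℕ) : ℤ :=
  γ.sum fun v m =>
    match v with
    | .inl k => (m * k : ℤ)
    | .inr _ => -(m : ℤ)

/-- The derivation `z^γ D^{(n)}`. -/
noncomputable def zD {d : ℕ} (γ : Var d →₀ ℕ) (n : MIdx d) :
    Derivation ℝ (Rg d) (Rg d) :=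
  (MvPolynomial.monomial γ (1 : ℝ) : Rg d) • Dop n

/-- Basis of `L`: the symbols `z^γ D^{(n)}` with `[γ] ≥ 0`, together with the
symbols `∂_i`. -/
abbrev LBasis (d : ℕ) :=
  {p : (Var d →₀ ℕ) × MIdx d // 0 ≤ bc p.1} ⊕ Fin (d + 1)

/-- The vector space `L` spanned by the `z^γ D^{(n)}` (`[γ] ≥ 0`) and the `∂_i`. -/
abbrev LSpace (d : ℕ) := LBasis d →₀ ℝ

noncomputable def ofL {d : ℕ} (x : LBasis d) : LSpace d := Finsupp.single x 1

/-- Expansion of a polynomial coefficient in the basis of `L` (with fixed `D^{(n')}`),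
keeping only the monomials `z^β` with `[β] ≥ 0`. -/
noncomputable def toL {d : ℕ} (p : Rg d) (n' : MIdx d) : LSpace d :=
  p.support.sum fun β =>
    if h : 0 ≤ bc β then
      MvPolynomial.coeff β p • Finsupp.single (Sum.inl ⟨(β, n'), h⟩) (1 : ℝ)
    else 0

/-- The bracket `[·,·]_0` on basis elements: zero except for
`[z^γ D^{(n)}, ∂_i]_0 = n_i z^γ D^{(n-e_i)}` (and its antisymmetric counterpart). -/
noncomputable def brL0 {d : ℕ} : LBasis d → LBasis d → LSpace d
  | .inl ⟨(γ, n), h⟩, .inr i =>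
      (n i : ℝ) • Finsupp.single (.inl ⟨(γ, n - eVec d i), h⟩) 1
  | .inr i, .inl ⟨(γ, n), h⟩ =>
      -((n i : ℝ) • Finsupp.single (.inl ⟨(γ, n - eVec d i), h⟩) 1)
  | _, _ => 0

/-- Bilinear extension of `[·,·]_0` to `L`. -/
noncomputable def brL {d : ℕ} : LSpace d →ₗ[ℝ] LSpace d →ₗ[ℝ] LSpace d :=
  Finsupp.lift _ ℝ (LBasis d) fun x =>
    Finsupp.lift (LSpace d) ℝ (LBasis d) fun y => brL0 x y

/-- The product `▶̂` on basis elements: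
`z^γ D^{(n)} ▶̂ z^{γ'} D^{(n')} = (z^γ D^{(n)} ▸ z^{γ'}) D^{(n')}` (action on the
coefficient as a derivation), `∂_i ▶̂ z^γ D^{(n)} = (∂_i z^γ) D^{(n)}`,
`z^γ D^{(n)} ▶̂ ∂_i = 0`, `∂_i ▶̂ ∂_j = 0`. -/
noncomputable def triL0 {d : ℕ} : LBasis d → LBasis d → LSpace d
  | .inl ⟨(γ, n), _⟩, .inl ⟨(γ', n'), _⟩ =>
      toL (zD γ n (MvPolynomial.monomial γ' (1 : ℝ))) n'
  | .inr i, .inl ⟨(γ, n), _⟩ =>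
      toL (partialOp i (MvPolynomial.monomial γ (1 : ℝ))) n
  | _, _ => 0

/-- Bilinear extension of `▶̂` to `L`. -/
noncomputable def triL {d : ℕ} : LSpace d →ₗ[ℝ] LSpace d →ₗ[ℝ] LSpace d :=
  Finsupp.lift _ ℝ (LBasis d) fun x =>
    Finsupp.lift (LSpace d) ℝ (LBasis d) fun y => triL0 x y


/-- Realization of elements of `L` as derivations on `ℝ[z_k, z_n]`. -/
noncomputable def realL {d : ℕ} : LSpace d →ₗ[ℝ] Derivation ℝ (Rg d) (Rg d) :=
  Finsupp.lift (Derivation ℝ (Rg d) (Rg d)) ℝ (LBasis d) fun x =>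
    match x with
    | .inl ⟨(γ, n), _⟩ => zD γ n
    | .inr i => partialOp i

/-- The derived bracket `[[x,y]] = [x,y]_0 + x ▶̂ y - y ▶̂ x`. -/
noncomputable def dbrL {d : ℕ} (x y : LSpace d) : LSpace d :=
  brL x y + triL x y - triL y x

section Aux

variable {d : ℕ}

lemma bc_add (γ δ : Var d →₀ ℕ) : bc (γ + δ) = bc γ + bc δ := by
  unfold bc
  rw [Finsupp.sum_add_index]
  · intro v _; cases v <;> simp
  · intro v _ m1 m2; cases v <;> push_cast <;> ring

lemma bc_single (v : Var d) (m : ℕ) :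
    bc (Finsupp.single v m) = match v with
      | .inl k => (m * k : ℤ)
      | .inr _ => -(m : ℤ) := by
  unfold bc
  rw [Finsupp.sum_single_index] <;> cases v <;> simp

lemma bc_sub_single {γ : Var d →₀ ℕ} {v : Var d} (hv : v ∈ γ.support) :
    bc (γ - Finsupp.single v 1) = bc γ - bc (Finsupp.single v 1) := by
  have h : γ - Finsupp.single v 1 + Finsupp.single v 1 = γ := by
    apply tsub_add_cancel_of_le
    rw [Finsupp.single_le_iff, Nat.succ_le_iff, pos_iff_ne_zero]
    exact Finsupp.mem_support_iff.mp hv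
  have := bc_add (γ - Finsupp.single v 1) (Finsupp.single v 1)
  rw [h] at this
  omega

end Aux
section Supp
variable {d : ℕ}

lemma bc_of_mem_monomial {β s : Var d →₀ ℕ} {c : ℝ}
    (hβ : β ∈ (MvPolynomial.monomial s c).support) : β = s := by
  have := MvPolynomial.support_monomial_subset hβ
  rwa [Finset.mem_singleton] at this

lemma Dop_monomial_support {n : MIdx d} {γ : Var d →₀ ℕ} :
    ∀ β ∈ (Dop n (MvPolynomial.monomial γ (1:ℝ))).support, bc β = bc γ + 1 := by
  classical
  intro β hβ
  unfold Dop at hβ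
  split at hβ
  · rw [MvPolynomial.mkDerivation_monomial, one_smul, Finsupp.sum] at hβ
    obtain ⟨v, hv, hβ⟩ := Finset.mem_biUnion.mp (MvPolynomial.support_sum hβ)
    cases v with
    | inl k =>
      simp only [smul_eq_mul, MvPolynomial.X, mul_smul_comm,
        MvPolynomial.monomial_mul, MvPolynomial.smul_monomial, mul_zero,
        MvPolynomial.support_zero] at hβ
      have hβ' := bc_of_mem_monomial hβ
      subst hβ'
      rw [bc_add, bc_sub_single hv, bc_single, bc_single]
      push_cast; ring
    | inr m =>
      simp only [smul_eq_mul, mul_zero, MvPolynomial.support_zero] at hβ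
      exact absurd hβ (Finset.notMem_empty β)
  · rw [MvPolynomial.mkDerivation_monomial, one_smul, Finsupp.sum] at hβ
    obtain ⟨v, hv, hβ⟩ := Finset.mem_biUnion.mp (MvPolynomial.support_sum hβ)
    cases v with
    | inl k =>
      simp only [smul_eq_mul, mul_zero, MvPolynomial.support_zero] at hβ
      exact absurd hβ (Finset.notMem_empty β)
    | inr m =>
      by_cases hm : m.val = n
      · simp only [hm, eq_self_iff_true, if_true, smul_eq_mul, mul_one] at hβ
        have hβ' := bc_of_mem_monomial hβ
        subst hβ'
        rw [bc_sub_single hv, bc_single]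
        push_cast; ring
      · simp only [if_neg hm, smul_eq_mul, mul_zero, MvPolynomial.support_zero] at hβ
        exact absurd hβ (Finset.notMem_empty β)

lemma partialOp_monomial_support {i : Fin (d+1)} {γ : Var d →₀ ℕ} :
    ∀ β ∈ (partialOp i (MvPolynomial.monomial γ (1:ℝ))).support, bc β = bc γ := by
  classical
  intro β hβ
  unfold partialOp at hβ
  rw [MvPolynomial.mkDerivation_monomial, one_smul, Finsupp.sum] at hβ
  obtain ⟨v, hv, hβ⟩ := Finset.mem_biUnion.mp (MvPolynomial.support_sum hβ)
  cases v with
  | inl k =>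
    simp only [smul_eq_mul, MvPolynomial.X, mul_smul_comm,
      MvPolynomial.monomial_mul, MvPolynomial.smul_monomial] at hβ
    have hβ' := bc_of_mem_monomial hβ
    subst hβ'
    rw [bc_add, bc_add, bc_sub_single hv, bc_single, bc_single, bc_single]
    push_cast; ring
  | inr m =>
    simp only [smul_eq_mul, MvPolynomial.X, mul_smul_comm,
      MvPolynomial.monomial_mul, MvPolynomial.smul_monomial] at hβ
    have hβ' := bc_of_mem_monomial hβ
    subst hβ'
    rw [bc_add, bc_sub_single hv, bc_single, bc_single]
    push_cast; ring

end Supp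
section Real
variable {d : ℕ}

lemma realL_single_inl (γ : Var d →₀ ℕ) (n : MIdx d) (h : 0 ≤ bc γ) (c : ℝ) :
    realL (Finsupp.single (Sum.inl ⟨(γ, n), h⟩) c : LSpace d) = c • zD γ n := by
  unfold realL
  rw [Finsupp.lift_apply, Finsupp.sum_single_index (by simp)]

lemma realL_single_inr (i : Fin (d+1)) (c : ℝ) :
    realL (Finsupp.single (Sum.inr i) c : LSpace d) = c • partialOp i := by
  unfold realL
  rw [Finsupp.lift_apply, Finsupp.sum_single_index (by simp)]

lemma realL_toL (p : Rg d) (n' : MIdx d) (h : ∀ β ∈ p.support, 0 ≤ bc β) :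
    realL (toL p n') = p • Dop n' := by
  unfold toL
  rw [map_sum]
  have hs : (∑ β ∈ p.support, (MvPolynomial.monomial β (MvPolynomial.coeff β p) : Rg d)) • Dop n'
      = ∑ β ∈ p.support, (MvPolynomial.monomial β (MvPolynomial.coeff β p) : Rg d) • Dop n' :=
    Finset.sum_smul
  rw [Finset.sum_congr rfl (fun β hβ => ?_), ← hs,
    MvPolynomial.support_sum_monomial_coeff]
  · rw [dif_pos (h β hβ), map_smul, realL_single_inl _ _ _ 1, one_smul]
    show MvPolynomial.coeff β p • ((MvPolynomial.monomial β (1:ℝ) : Rg d) • Dop n')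
      = (MvPolynomial.monomial β (MvPolynomial.coeff β p) : Rg d) • Dop n'
    rw [← smul_assoc, MvPolynomial.smul_monomial, smul_eq_mul, mul_one]

end Real
section Comm
variable {d : ℕ}

lemma smul_commutator (a b : Rg d) (D E : Derivation ℝ (Rg d) (Rg d)) :
    ⁅a • D, b • E⁆ = (a * D b) • E - (b * E a) • D + (a * b) • ⁅D, E⁆ := by
  ext x
  simp only [Derivation.commutator_apply, Derivation.smul_apply, smul_eq_mul,
    Derivation.leibniz, Derivation.add_apply, Derivation.sub_apply]
  ring

lemma smul_commutator_right (a : Rg d) (D E : Derivation ℝ (Rg d) (Rg d)) :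
    ⁅a • D, E⁆ = a • ⁅D, E⁆ - (E a) • D := by
  ext x
  simp only [Derivation.commutator_apply, Derivation.smul_apply, smul_eq_mul,
    Derivation.leibniz, Derivation.add_apply, Derivation.sub_apply]
  ring

end Comm
section Xlem
variable {d : ℕ}

lemma Dop_X_inl (n : MIdx d) (k : ℕ) :
    Dop n (X (.inl k)) = if n = 0 then ((k + 1 : ℕ) : ℝ) • (X (.inl (k+1)) : Rg d) else 0 := by
  unfold Dop
  split <;> rw [MvPolynomial.mkDerivation_X]

lemma Dop_X_inr (n : MIdx d) (m : {n : MIdx d // n ≠ 0}) :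
    Dop n (X (.inr m)) = if n = 0 then 0 else if m.val = n then 1 else 0 := by
  unfold Dop
  split <;> rw [MvPolynomial.mkDerivation_X]

lemma partialOp_X_inl (i : Fin (d+1)) (k : ℕ) :
    partialOp i (X (.inl k)) = ((k + 1 : ℕ) : ℝ) •
      ((X (.inr ⟨eVec d i, eVec_ne_zero i⟩) : Rg d) * X (.inl (k + 1))) := by
  unfold partialOp; rw [MvPolynomial.mkDerivation_X]

lemma partialOp_X_inr (i : Fin (d+1)) (m : {n : MIdx d // n ≠ 0}) :
    partialOp i (X (.inr m)) = ((m.val i + 1 : ℕ) : ℝ) •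
      (X (.inr ⟨m.val + eVec d i, add_eVec_ne_zero m.val i⟩) : Rg d) := by
  unfold partialOp; rw [MvPolynomial.mkDerivation_X]

lemma Dop_comm (n n' : MIdx d) : ⁅Dop n, Dop n'⁆ = 0 := by
  ext v
  cases v with
  | inl k =>
    rw [Derivation.commutator_apply, Derivation.zero_apply, Dop_X_inl, Dop_X_inl]
    by_cases h : n = 0 <;> by_cases h' : n' = 0 <;>
      simp [h, h', Dop_X_inl, mul_comm]
  | inr m =>
    rw [Derivation.commutator_apply, Derivation.zero_apply, Dop_X_inr, Dop_X_inr]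
    by_cases h : n = 0 <;> by_cases h' : n' = 0 <;>
      simp [h, h', apply_ite, Derivation.map_one_eq_zero]

end Xlem
section PComm
variable {d : ℕ}

lemma eVec_apply (i j : Fin (d+1)) : eVec d i j = if j = i then 1 else 0 := by
  simp [eVec, Pi.single_apply]

lemma partial_comm (i j : Fin (d+1)) : ⁅partialOp i, partialOp j⁆ = 0 := by
  apply MvPolynomial.derivation_ext
  intro v
  rw [Derivation.commutator_apply, Derivation.zero_apply]
  cases v with
  | inl k =>
    rw [partialOp_X_inl, partialOp_X_inl, Derivation.map_smul, Derivation.map_smul, Derivation.leibniz,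
      Derivation.leibniz, partialOp_X_inl, partialOp_X_inl, partialOp_X_inr, partialOp_X_inr]
    dsimp only
    have h1 : (⟨eVec d j + eVec d i, add_eVec_ne_zero _ _⟩ : {n : MIdx d // n ≠ 0})
        = ⟨eVec d i + eVec d j, add_eVec_ne_zero _ _⟩ := Subtype.ext (add_comm _ _)
    have h2 : (eVec d j) i = (eVec d i) j := by
      rw [eVec_apply, eVec_apply]
      simp only [eq_comm]
    rw [h1, h2]
    simp only [MvPolynomial.smul_eq_C_mul, smul_eq_mul]
    ring
  | inr m =>
    rw [partialOp_X_inr, Derivation.map_smul, partialOp_X_inr, partialOp_X_inr, Derivation.map_smul,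
      partialOp_X_inr]
    dsimp only
    have h1 : (⟨m.val + eVec d j + eVec d i, add_eVec_ne_zero _ _⟩ : {n : MIdx d // n ≠ 0})
        = ⟨m.val + eVec d i + eVec d j, add_eVec_ne_zero _ _⟩ :=
      Subtype.ext (add_right_comm _ _ _)
    rw [h1, smul_smul, smul_smul, ← sub_smul]
    have h2 : ((m.val j + 1 : ℕ) : ℝ) * (((m.val + eVec d j) i + 1 : ℕ) : ℝ)
        - ((m.val i + 1 : ℕ) : ℝ) * (((m.val + eVec d i) j + 1 : ℕ) : ℝ) = 0 := by
      simp only [Pi.add_apply, eVec_apply]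
      by_cases h : i = j
      · subst h; simp
      · rw [if_neg h, if_neg (fun hh => h hh.symm)]
        push_cast; ring
    rw [h2, zero_smul]

end PComm
section DPComm
variable {d : ℕ}

lemma sub_eVec_ne_zero {n : MIdx d} {i : Fin (d+1)} (h1 : n ≠ eVec d i) (h2 : n i ≠ 0) :
    n - eVec d i ≠ 0 := by
  intro h0
  apply h1
  funext j
  have hj := congrFun h0 j
  rw [Pi.sub_apply, eVec_apply, Pi.zero_apply] at hj
  rw [eVec_apply]
  by_cases hji : j = i
  · rw [if_pos hji] at hj ⊢
    subst hji
    omega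
  · rw [if_neg hji] at hj ⊢
    omega

lemma eVec_sub_self (i : Fin (d+1)) : eVec d i - eVec d i = 0 := by
  funext j; rw [Pi.sub_apply, Pi.zero_apply]; omega

lemma add_sub_eVec (m : MIdx d) (i : Fin (d+1)) : m + eVec d i - eVec d i = m := by
  funext j
  rw [Pi.sub_apply, Pi.add_apply]
  omega

lemma sub_add_eVec {n : MIdx d} {i : Fin (d+1)} (h : n i ≠ 0) :
    n - eVec d i + eVec d i = n := by
  funext j
  rw [Pi.add_apply, Pi.sub_apply, eVec_apply]
  by_cases hji : j = i
  · rw [if_pos hji]; subst hji; omega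
  · rw [if_neg hji]; omega

lemma eq_eVec_of_sub_eq_zero {d : ℕ} {n : MIdx d} {i : Fin (d+1)}
    (hn : n ≠ 0) (hz : n - eVec d i = 0) : n = eVec d i := by
  have hle : ∀ j, n j ≤ eVec d i j := by
    intro j
    have := congrFun hz j
    rw [Pi.sub_apply, Pi.zero_apply] at this
    omega
  have hni : n i ≠ 0 := by
    intro h0
    apply hn
    funext j
    have hj := hle j
    rw [eVec_apply] at hj
    rw [Pi.zero_apply]
    by_cases hji : j = i
    · subst hji; exact h0
    · rw [if_neg hji] at hj; omega
  funext j
  have hj := hle j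
  rw [eVec_apply] at hj
  rw [eVec_apply]
  by_cases hji : j = i
  · rw [if_pos hji] at hj ⊢
    subst hji
    omega
  · rw [if_neg hji] at hj ⊢
    omega

lemma Dop_partial_comm {d : ℕ} (n : MIdx d) (i : Fin (d+1)) :
    ⁅Dop n, partialOp i⁆ = (n i : ℝ) • Dop (n - eVec d i) := by
  apply MvPolynomial.derivation_ext
  intro v
  rw [Derivation.commutator_apply, Derivation.smul_apply]
  by_cases hn : n = 0
  · subst hn
    have h0 : (((0 : MIdx d) i : ℕ) : ℝ) = 0 := by norm_num [Pi.zero_apply]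
    rw [h0, zero_smul]
    cases v with
    | inl k =>
      rw [partialOp_X_inl, Dop_X_inl, if_pos rfl, Derivation.map_smul, Derivation.map_smul,
        Derivation.leibniz, Dop_X_inl, if_pos rfl, Dop_X_inr, if_pos rfl, partialOp_X_inl]
      simp only [smul_zero, add_zero, MvPolynomial.smul_eq_C_mul, smul_eq_mul]
      ring
    | inr m =>
      rw [Dop_X_inr, if_pos rfl, Derivation.map_zero, partialOp_X_inr, Derivation.map_smul,
        Dop_X_inr, if_pos rfl, smul_zero, sub_zero]
  · cases v with
    | inl k =>
      rw [partialOp_X_inl, Dop_X_inl, if_neg hn, Derivation.map_zero, sub_zero,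
        Derivation.map_smul, Derivation.leibniz, Dop_X_inl, if_neg hn, Dop_X_inr, if_neg hn,
        Dop_X_inl]
      dsimp only
      by_cases hei : eVec d i = n
      · have h2 : n - eVec d i = 0 := by rw [← hei]; exact eVec_sub_self i
        have h3 : n i = 1 := by rw [← hei, eVec_apply, if_pos rfl]
        rw [if_pos hei, if_pos h2, h3, smul_zero, zero_add, smul_eq_mul, mul_one,
          Nat.cast_one, one_smul]
      · have hz : n - eVec d i ≠ 0 := fun hz => hei (eq_eVec_of_sub_eq_zero hn hz).symm
        rw [if_neg hei, if_neg hz, smul_zero, smul_zero, add_zero, smul_zero, smul_zero]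
    | inr m =>
      rw [partialOp_X_inr, Dop_X_inr, if_neg hn, Derivation.map_smul, Dop_X_inr, if_neg hn,
        Dop_X_inr]
      dsimp only
      rw [apply_ite (⇑(partialOp i)), Derivation.map_one_eq_zero, Derivation.map_zero,
        ite_self, sub_zero]
      by_cases hmn : m.val + eVec d i = n
      · have hni : n i ≠ 0 := by
          rw [← hmn, Pi.add_apply, eVec_apply, if_pos rfl]; omega
        have hsub : n - eVec d i = m.val := by rw [← hmn]; exact add_sub_eVec _ _
        have hnz : n - eVec d i ≠ 0 := by rw [hsub]; exact m.prop
        rw [if_pos hmn, if_neg hnz, if_pos hsub.symm, ← hmn, Pi.add_apply, eVec_apply,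
          if_pos rfl]
      · rw [if_neg hmn, smul_zero]
        by_cases hz : n - eVec d i = 0
        · rw [if_pos hz, smul_zero]
        · rw [if_neg hz]
          by_cases hni : n i = 0
          · rw [hni, Nat.cast_zero, zero_smul]
          · have hne : m.val ≠ n - eVec d i := by
              intro hh
              apply hmn
              rw [hh, sub_add_eVec hni]
            rw [if_neg hne, smul_zero]

end DPComm
section Reduction
variable {d : ℕ}

lemma brL_single (a b : LBasis d) (c c' : ℝ) :
    brL (Finsupp.single a c) (Finsupp.single b c') = (c * c') • brL0 a b := by
  unfold brL
  rw [Finsupp.lift_apply, Finsupp.sum_single_index (by simp), LinearMap.smul_apply,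
    Finsupp.lift_apply, Finsupp.sum_single_index (by simp), smul_smul]

lemma triL_single (a b : LBasis d) (c c' : ℝ) :
    triL (Finsupp.single a c) (Finsupp.single b c') = (c * c') • triL0 a b := by
  unfold triL
  rw [Finsupp.lift_apply, Finsupp.sum_single_index (by simp), LinearMap.smul_apply,
    Finsupp.lift_apply, Finsupp.sum_single_index (by simp), smul_smul]

lemma dbrL_single_single (a b : LBasis d) (c c' : ℝ) :
    dbrL (Finsupp.single a c) (Finsupp.single b c') = (c * c') • dbrL (ofL a) (ofL b) := by
  unfold dbrL ofL
  rw [brL_single, triL_single, triL_single, brL_single, triL_single, triL_single]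
  simp only [one_mul, one_smul, smul_add, smul_sub]
  rw [mul_comm c' c]

lemma commutator_smul (c c' : ℝ) (D E : Derivation ℝ (Rg d) (Rg d)) :
    ⁅c • D, c' • E⁆ = (c * c') • ⁅D, E⁆ := by
  ext x
  simp only [Derivation.commutator_apply, Derivation.smul_apply, Derivation.map_smul,
    smul_smul, smul_sub]
  rw [mul_comm c' c]

end Reduction
section Basis
variable {d : ℕ}

lemma zD_apply (γ : Var d →₀ ℕ) (n : MIdx d) (q : Rg d) :
    zD γ n q = MvPolynomial.monomial γ (1:ℝ) * Dop n q := by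
  rw [zD, Derivation.smul_apply, smul_eq_mul]

lemma zD_support {γ γ' : Var d →₀ ℕ} (n : MIdx d) (hγ : 0 ≤ bc γ) (hγ' : 0 ≤ bc γ') :
    ∀ β ∈ (zD γ n (MvPolynomial.monomial γ' (1:ℝ))).support, 0 ≤ bc β := by
  classical
  intro β hβ
  rw [zD_apply] at hβ
  have hm := MvPolynomial.support_mul _ _ hβ
  rw [Finset.mem_add] at hm
  obtain ⟨b1, hb1, b2, hb2, rfl⟩ := hm
  have hb1' : b1 = γ := bc_of_mem_monomial hb1
  have hb2' := Dop_monomial_support _ hb2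
  rw [bc_add, hb1', hb2']
  omega

lemma partial_support {γ : Var d →₀ ℕ} (hγ : 0 ≤ bc γ) (i : Fin (d+1)) :
    ∀ β ∈ (partialOp i (MvPolynomial.monomial γ (1:ℝ))).support, 0 ≤ bc β := by
  intro β hβ
  rw [partialOp_monomial_support β hβ]
  exact hγ

lemma realL_ofL_inl (γ : Var d →₀ ℕ) (n : MIdx d) (h : 0 ≤ bc γ) :
    realL (ofL (.inl ⟨(γ, n), h⟩) : LSpace d) = zD γ n := by
  rw [ofL, realL_single_inl, one_smul]

lemma realL_ofL_inr (i : Fin (d+1)) :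
    realL (ofL (.inr i) : LSpace d) = partialOp i := by
  rw [ofL, realL_single_inr, one_smul]

lemma key_case (γ : Var d →₀ ℕ) (n : MIdx d) (hγ : 0 ≤ bc γ) (i : Fin (d+1)) :
    realL (dbrL (ofL (.inl ⟨(γ, n), hγ⟩)) (ofL (.inr i)))
      = (n i : ℝ) • zD γ (n - eVec d i)
        - (partialOp i (MvPolynomial.monomial γ (1:ℝ))) • Dop n := by
  unfold dbrL
  rw [ofL, ofL, brL_single, triL_single, triL_single, one_mul, one_smul]
  have h1 : brL0 (Sum.inl ⟨(γ, n), hγ⟩ : LBasis d) (.inr i)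
      = (n i : ℝ) • Finsupp.single (.inl ⟨(γ, n - eVec d i), hγ⟩) 1 := rfl
  have h2 : triL0 (Sum.inl ⟨(γ, n), hγ⟩ : LBasis d) (.inr i) = 0 := rfl
  have h3 : triL0 (.inr i) (Sum.inl ⟨(γ, n), hγ⟩ : LBasis d)
      = toL (partialOp i (MvPolynomial.monomial γ (1:ℝ))) n := rfl
  rw [h1, h2, h3]
  simp only [one_smul, smul_zero, add_zero]
  rw [map_sub, map_smul, realL_single_inl, one_smul,
    realL_toL _ _ (partial_support hγ i)]

lemma zD_bracket_partial (γ : Var d →₀ ℕ) (n : MIdx d) (i : Fin (d+1)) :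
    ⁅zD γ n, partialOp i⁆ = (n i : ℝ) • zD γ (n - eVec d i)
      - (partialOp i (MvPolynomial.monomial γ (1:ℝ))) • Dop n := by
  rw [zD, smul_commutator_right, Dop_partial_comm, smul_comm, ← zD]

lemma basis_case (a b : LBasis d) :
    realL (dbrL (ofL a) (ofL b)) = ⁅realL (ofL a), realL (ofL b)⁆ := by
  cases a with
  | inl p =>
    obtain ⟨⟨γ, n⟩, hγ⟩ := p
    cases b with
    | inl q =>
      obtain ⟨⟨γ', n'⟩, hγ'⟩ := q
      dsimp only at hγ hγ'
      rw [realL_ofL_inl, realL_ofL_inl]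
      unfold dbrL
      rw [ofL, ofL, brL_single, triL_single, triL_single, one_mul, one_smul]
      have h1 : brL0 (Sum.inl ⟨(γ, n), hγ⟩ : LBasis d) (Sum.inl ⟨(γ', n'), hγ'⟩) = 0 := rfl
      have h2 : triL0 (Sum.inl ⟨(γ, n), hγ⟩ : LBasis d) (Sum.inl ⟨(γ', n'), hγ'⟩)
          = toL (zD γ n (MvPolynomial.monomial γ' (1:ℝ))) n' := rfl
      have h3 : triL0 (Sum.inl ⟨(γ', n'), hγ'⟩ : LBasis d) (Sum.inl ⟨(γ, n), hγ⟩)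
          = toL (zD γ' n' (MvPolynomial.monomial γ (1:ℝ))) n := rfl
      rw [h1, h2, h3]
      simp only [one_smul, zero_add]
      rw [map_sub, realL_toL _ _ (zD_support n hγ hγ'),
        realL_toL _ _ (zD_support n' hγ' hγ)]
      rw [zD, zD, smul_commutator, Dop_comm, smul_zero, add_zero,
        ← zD_apply, ← zD_apply, ← zD, ← zD]
    | inr i =>
      dsimp only at hγ
      rw [realL_ofL_inl, realL_ofL_inr, key_case, zD_bracket_partial]
  | inr i =>
    cases b with
    | inl q =>
      obtain ⟨⟨γ, n⟩, hγ⟩ := q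
      dsimp only at hγ
      rw [realL_ofL_inr, realL_ofL_inl]
      have hanti : dbrL (ofL (.inr i) : LSpace d) (ofL (.inl ⟨(γ, n), hγ⟩))
          = - dbrL (ofL (.inl ⟨(γ, n), hγ⟩) : LSpace d) (ofL (.inr i)) := by
        unfold dbrL
        rw [ofL, ofL, brL_single, brL_single, triL_single, triL_single, one_mul, one_smul,
          one_smul]
        have h1 : brL0 (Sum.inr i : LBasis d) (Sum.inl ⟨(γ, n), hγ⟩)
            = - brL0 (Sum.inl ⟨(γ, n), hγ⟩ : LBasis d) (Sum.inr i) := rfl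
        rw [h1]
        module
      rw [hanti, map_neg, key_case, ← zD_bracket_partial γ n i, lie_skew]
    | inr j =>
      rw [realL_ofL_inr, realL_ofL_inr, partial_comm]
      have h1 : dbrL (ofL (.inr i) : LSpace d) (ofL (.inr j)) = 0 := by
        unfold dbrL
        rw [ofL, ofL, brL_single, triL_single, triL_single, one_mul]
        have h2 : brL0 (Sum.inr i : LBasis d) (Sum.inr j) = 0 := rfl
        have h3 : triL0 (Sum.inr i : LBasis d) (Sum.inr j) = 0 := rfl
        have h4 : triL0 (Sum.inr j : LBasis d) (Sum.inr i) = 0 := rfl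
        rw [h2, h3, h4]
        simp
      rw [h1, map_zero]

end Basis
section Final
variable {d : ℕ}

lemma dbrL_zero_left (y : LSpace d) : dbrL 0 y = 0 := by
  unfold dbrL
  simp

lemma dbrL_zero_right (x : LSpace d) : dbrL x 0 = 0 := by
  unfold dbrL
  simp

lemma dbrL_add_left (f g y : LSpace d) : dbrL (f + g) y = dbrL f y + dbrL g y := by
  unfold dbrL
  simp only [map_add, LinearMap.add_apply]
  abel

lemma dbrL_add_right (x f g : LSpace d) : dbrL x (f + g) = dbrL x f + dbrL x g := by
  unfold dbrL
  simp only [map_add, LinearMap.add_apply]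
  abel

lemma realL_single_smul (a : LBasis d) (c : ℝ) :
    realL (Finsupp.single a c : LSpace d) = c • realL (ofL a) := by
  rw [ofL, ← map_smul, Finsupp.smul_single', mul_one]

end Final

section Comm2
variable {d : ℕ}

lemma commutator_zero_left (E : Derivation ℝ (Rg d) (Rg d)) : ⁅(0 : Derivation ℝ (Rg d) (Rg d)), E⁆ = 0 := by
  ext x
  simp [Derivation.commutator_apply]

lemma commutator_zero_right (E : Derivation ℝ (Rg d) (Rg d)) : ⁅E, (0 : Derivation ℝ (Rg d) (Rg d))⁆ = 0 := by
  ext x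
  simp [Derivation.commutator_apply]

lemma commutator_add_left (D E F : Derivation ℝ (Rg d) (Rg d)) :
    ⁅D + E, F⁆ = ⁅D, F⁆ + ⁅E, F⁆ := by
  ext x
  simp only [Derivation.commutator_apply, Derivation.add_apply, map_add]
  abel

lemma commutator_add_right (D E F : Derivation ℝ (Rg d) (Rg d)) :
    ⁅D, E + F⁆ = ⁅D, E⁆ + ⁅D, F⁆ := by
  ext x
  simp only [Derivation.commutator_apply, Derivation.add_apply, map_add]
  abel

end Comm2

set_option maxHeartbeats 1000000 in
/-- The derived bracket of the post-Lie algebra `(L, [·,·]_0, ▶̂)` equals the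
commutator of derivations; in particular
`[[z^γ D^{(n)}, ∂_i]] = n_i z^γ D^{(n-e_i)} - (∂_i z^γ) D^{(n)}`. -/
theorem derived_bracket_is_commutator {d : ℕ} :
    (∀ x y : LSpace d, realL (dbrL x y) = ⁅realL x, realL y⁆) ∧
    (∀ (γ : Var d →₀ ℕ) (n : MIdx d) (h : 0 ≤ bc γ) (i : Fin (d + 1)),
      realL (dbrL (ofL (.inl ⟨(γ, n), h⟩)) (ofL (.inr i)))
        = (n i : ℝ) • zD γ (n - eVec d i)
          - (partialOp i (MvPolynomial.monomial γ (1 : ℝ))) • Dop n) := by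
  constructor
  · intro x y
    induction x using Finsupp.induction_linear with
    | zero =>
      rw [dbrL_zero_left, map_zero]
      exact (commutator_zero_left _).symm
    | add f g hf hg =>
      rw [dbrL_add_left, map_add, map_add, hf, hg]
      exact (commutator_add_left _ _ _).symm
    | single a c =>
      induction y using Finsupp.induction_linear with
      | zero =>
        rw [dbrL_zero_right, map_zero]
        exact (commutator_zero_right _).symm
      | add f g hf hg =>
        rw [dbrL_add_right, map_add, map_add, hf, hg]
        exact (commutator_add_right _ _ _).symm
      | single b c' =>
        rw [dbrL_single_single, map_smul, basis_case, realL_single_smul,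
          realL_single_smul, commutator_smul]
  · exact fun γ n h i => key_case γ n h i
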